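/- arXiv:1210.5345 — 4 statements merged into one kernel-verified Lean document; each statement's English description precedes it below -/
import Mathlib

section
/- Let d ≥ 1, K ≥ 1, n > 0. Let w_1,…,w_K > 0 and σ_1,…,σ_K ≥ 0 with Σ_K := Σ_{k=1}^K (w_k σ_k)^{d/(d+1)} > 0. Then for any positive reals S_1,…,S_K with Σ_{k=1}^K S_k ≤ n, one has Σ_{k=1}^K w_k² σ_k² / S_k^{1+2/d} ≥ Σ_K^{2(d+1)/d} / n^{1+2/d}, and equality holds for the choice S_k = λ_{K,k} n where λ_{K,k} = (w_k σ_k)^{d/(d+1)} / Σ_K (provided σ_k > 0 for all k). -/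
open MeasureTheory Filter Set
open scoped ENNReal RealInnerProductSpace

noncomputable def unitCube (d : ℕ) : Set (EuclideanSpace ℝ (Fin d)) :=
  {x | ∀ i, x i ∈ Set.Icc (0:ℝ) 1}

/-- Mean of `f` on `Ω` (w.r.t. normalized Lebesgue measure on `Ω`). -/
noncomputable def meanOn {d : ℕ} (f : EuclideanSpace ℝ (Fin d) → ℝ)
    (Ω : Set (EuclideanSpace ℝ (Fin d))) : ℝ :=
  (volume Ω).toReal⁻¹ * ∫ x in Ω, f x

/-- Variance of `f` on `Ω`. -/
noncomputable def varOn {d : ℕ} (f : EuclideanSpace ℝ (Fin d) → ℝ)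
    (Ω : Set (EuclideanSpace ℝ (Fin d))) : ℝ :=
  (volume Ω).toReal⁻¹ * ∫ x in Ω, (f x - meanOn f Ω)^2

/-- Standard deviation of `f` on `Ω`. -/
noncomputable def stddevOn {d : ℕ} (f : EuclideanSpace ℝ (Fin d) → ℝ)
    (Ω : Set (EuclideanSpace ℝ (Fin d))) : ℝ :=
  Real.sqrt (varOn f Ω)

/-- `Ω` is an axis-aligned hypercube (product of `d` intervals of equal positive length). -/
def IsCube {d : ℕ} (Ω : Set (EuclideanSpace ℝ (Fin d))) : Prop :=
  ∃ (a : Fin d → ℝ) (l : ℝ), 0 < l ∧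
    Ω = {x : EuclideanSpace ℝ (Fin d) | ∀ i, x i ∈ Set.Icc (a i) (a i + l)}

/-- The axis-aligned hypercube of Lebesgue measure `w` centered at `a`. -/
noncomputable def centeredCube (d : ℕ) (a : EuclideanSpace ℝ (Fin d)) (w : ℝ) :
    Set (EuclideanSpace ℝ (Fin d)) :=
  {x | ∀ i, x i ∈ Set.Icc (a i - w ^ (1/(d:ℝ)) / 2) (a i + w ^ (1/(d:ℝ)) / 2)}

/-- `Ωs` is a partition (up to null sets) of the unit cube `[0,1]^d`. -/
def IsAEPartition {d : ℕ} {ι : Type*} (Ωs : ι → Set (EuclideanSpace ℝ (Fin d))) : Prop :=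
  (∀ k, MeasurableSet (Ωs k)) ∧ (∀ k, Ωs k ⊆ unitCube d) ∧
  (∀ k j, k ≠ j → volume (Ωs k ∩ Ωs j) = 0) ∧
  volume (unitCube d \ ⋃ k, Ωs k) = 0


/-!
With `c k = (w k σ k) ^ (d/(d+1))` and `p = 1 + 2/d`, one has `w k² σ k² = c k ^ (p+1)`, so the
pseudo-risk is `∑ c k ^ (p+1) / S k ^ p`. Radon's inequality (weighted Hölder with weights `S k`
applied to `c k / S k`) bounds it below by `(∑ c k) ^ (p+1) / (∑ S k) ^ p`, and this bound is
attained by `S k = c k / (∑ c) * n`.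
-/

open Finset

theorem radon_inequality {ι : Type*} (s : Finset ι) {p : ℝ} (hp : 0 ≤ p) {c S : ι → ℝ}
    (hc : ∀ i, 0 ≤ c i) (hS : ∀ i, 0 < S i) :
    (∑ i ∈ s, c i) ^ (p + 1) ≤ (∑ i ∈ s, S i) ^ p * ∑ i ∈ s, c i ^ (p + 1) / S i ^ p := by
  have hp1 : 0 < p + 1 := by linarith
  have holder := Real.inner_le_weight_mul_Lp_of_nonneg s (by linarith : 1 ≤ p + 1) S
    (fun i => c i / S i) (fun i => (hS i).le) (fun i => div_nonneg (hc i) (hS i).le)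
  have hweight : ∀ i, S i * (c i / S i) = c i := fun i => mul_div_cancel₀ _ (hS i).ne'
  have hweight_pow : ∀ i, S i * (c i / S i) ^ (p + 1) = c i ^ (p + 1) / S i ^ p := by
    intro i
    rw [Real.div_rpow (hc i) (hS i).le, Real.rpow_add_one (hS i).ne']
    field_simp [(hS i).ne']
  simp only [hweight, hweight_pow] at holder
  have hSsum : 0 ≤ ∑ i ∈ s, S i := sum_nonneg fun i _ => (hS i).le
  have hR : 0 ≤ ∑ i ∈ s, c i ^ (p + 1) / S i ^ p :=
    sum_nonneg fun i _ => div_nonneg (Real.rpow_nonneg (hc i) _) (Real.rpow_nonneg (hS i).le _)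
  calc (∑ i ∈ s, c i) ^ (p + 1)
      ≤ ((∑ i ∈ s, S i) ^ (1 - (p + 1)⁻¹) * (∑ i ∈ s, c i ^ (p + 1) / S i ^ p) ^ (p + 1)⁻¹)
          ^ (p + 1) :=
        Real.rpow_le_rpow (sum_nonneg fun i _ => hc i) holder hp1.le
    _ = (∑ i ∈ s, S i) ^ p * ∑ i ∈ s, c i ^ (p + 1) / S i ^ p := by
        rw [Real.mul_rpow (Real.rpow_nonneg hSsum _) (Real.rpow_nonneg hR _),
          ← Real.rpow_mul hSsum, ← Real.rpow_mul hR, inv_mul_cancel₀ hp1.ne', Real.rpow_one]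
        congr 2
        field_simp
        ring

theorem rpow_add_one_div_mul_rpow {p c t : ℝ} (hp : 0 ≤ p) (hc : 0 ≤ c) (ht : 0 < t) :
    c ^ (p + 1) / (c * t) ^ p = c / t ^ p := by
  rcases hc.eq_or_lt with rfl | hc
  · simp [Real.zero_rpow (by linarith : p + 1 ≠ 0)]
  · rw [Real.rpow_add_one hc.ne', Real.mul_rpow hc.le ht.le,
      mul_div_mul_left _ _ (Real.rpow_pos_of_pos hc p).ne']

theorem radon_eq_of_proportional {ι : Type*} (s : Finset ι) {p : ℝ} (hp : 0 ≤ p) {c : ι → ℝ}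
    (hc : ∀ i, 0 ≤ c i) (hsum : 0 < ∑ i ∈ s, c i) {n : ℝ} (hn : 0 < n) :
    ∑ i ∈ s, c i ^ (p + 1) / (c i / (∑ j ∈ s, c j) * n) ^ p
      = (∑ i ∈ s, c i) ^ (p + 1) / n ^ p := by
  have ht : 0 < n / ∑ j ∈ s, c j := div_pos hn hsum
  calc ∑ i ∈ s, c i ^ (p + 1) / (c i / (∑ j ∈ s, c j) * n) ^ p
      = ∑ i ∈ s, c i / (n / ∑ j ∈ s, c j) ^ p := by
        refine sum_congr rfl fun i _ => ?_
        rw [div_mul_eq_mul_div, mul_div_assoc, rpow_add_one_div_mul_rpow hp (hc i) ht]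
    _ = (∑ i ∈ s, c i) ^ (p + 1) / n ^ p := by
        rw [← sum_div, Real.div_rpow hn.le hsum.le, Real.rpow_add_one hsum.ne']
        field_simp

theorem stmt4_general (d K : ℕ) (hd : 1 ≤ d) (n : ℝ) (hn : 0 < n)
    (w σ : Fin K → ℝ) (hw : ∀ k, 0 < w k) (hσ : ∀ k, 0 ≤ σ k)
    (hSigma : 0 < ∑ k, (w k * σ k) ^ ((d:ℝ)/((d:ℝ)+1))) :
    (∀ S : Fin K → ℝ, (∀ k, 0 < S k) → (∑ k, S k) ≤ n →
        (∑ k, (w k * σ k) ^ ((d:ℝ)/((d:ℝ)+1))) ^ (2*((d:ℝ)+1)/(d:ℝ)) / n ^ (1+2/(d:ℝ))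
          ≤ ∑ k, (w k)^2 * (σ k)^2 / (S k) ^ (1+2/(d:ℝ)))
    ∧ ((∀ k, 0 < σ k) →
        (∑ k, (w k)^2 * (σ k)^2 /
            (((w k * σ k) ^ ((d:ℝ)/((d:ℝ)+1))
                / (∑ i, (w i * σ i) ^ ((d:ℝ)/((d:ℝ)+1))) * n) ^ (1+2/(d:ℝ))))
          = (∑ k, (w k * σ k) ^ ((d:ℝ)/((d:ℝ)+1))) ^ (2*((d:ℝ)+1)/(d:ℝ)) / n ^ (1+2/(d:ℝ))) := by
  have hD : (0:ℝ) < d := by exact_mod_cast hd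
  set p : ℝ := 1 + 2 / (d:ℝ)
  set c : Fin K → ℝ := fun k => (w k * σ k) ^ ((d:ℝ)/((d:ℝ)+1))
  have hp : 0 ≤ p := by positivity
  have hc : ∀ k, 0 ≤ c k := fun k => Real.rpow_nonneg (mul_nonneg (hw k).le (hσ k)) _
  have hexp : 2 * ((d:ℝ) + 1) / d = p + 1 := by simp only [p]; field_simp; ring
  have hsq : ∀ k, (w k)^2 * (σ k)^2 = c k ^ (p + 1) := by
    intro k
    rw [← Real.rpow_mul (mul_nonneg (hw k).le (hσ k)), ← hexp,
      show (d:ℝ) / (d + 1) * (2 * (d + 1) / d) = (2:ℕ) by field_simp; norm_num,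
      Real.rpow_natCast, mul_pow]
  simp only [hsq, hexp]
  refine ⟨fun S hS hSn => ?_, fun _ => radon_eq_of_proportional univ hp hc hSigma hn⟩
  rw [div_le_iff₀ (Real.rpow_pos_of_pos hn p), mul_comm]
  calc (∑ k, c k) ^ (p + 1) ≤ (∑ k, S k) ^ p * ∑ k, c k ^ (p + 1) / S k ^ p :=
        radon_inequality univ hp hc hS
    _ ≤ n ^ p * ∑ k, c k ^ (p + 1) / S k ^ p := by
        gcongr
        · exact sum_nonneg fun k _ => div_nonneg (Real.rpow_nonneg (hc k) _)
            (Real.rpow_nonneg (hS k).le _)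
        · exact sum_nonneg fun k _ => (hS k).le

/-- The optimal oracle allocation problem: lower bound on the pseudo-risk for any
allocation, with equality at the optimal proportions. -/
theorem stmt4 (d K : ℕ) (hd : 1 ≤ d) (hK : 1 ≤ K) (n : ℝ) (hn : 0 < n)
    (w σ : Fin K → ℝ) (hw : ∀ k, 0 < w k) (hσ : ∀ k, 0 ≤ σ k)
    (hSigma : 0 < ∑ k, (w k * σ k) ^ ((d:ℝ)/((d:ℝ)+1))) :
    (∀ S : Fin K → ℝ, (∀ k, 0 < S k) → (∑ k, S k) ≤ n →
        (∑ k, (w k * σ k) ^ ((d:ℝ)/((d:ℝ)+1))) ^ (2*((d:ℝ)+1)/(d:ℝ)) / n ^ (1+2/(d:ℝ))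
          ≤ ∑ k, (w k)^2 * (σ k)^2 / (S k) ^ (1+2/(d:ℝ)))
    ∧ ((∀ k, 0 < σ k) →
        (∑ k, (w k)^2 * (σ k)^2 /
            (((w k * σ k) ^ ((d:ℝ)/((d:ℝ)+1))
                / (∑ i, (w i * σ i) ^ ((d:ℝ)/((d:ℝ)+1))) * n) ^ (1+2/(d:ℝ))))
          = (∑ k, (w k * σ k) ^ ((d:ℝ)/((d:ℝ)+1))) ^ (2*((d:ℝ)+1)/(d:ℝ)) / n ^ (1+2/(d:ℝ))) :=
  stmt4_general d K hd n hn w σ hw hσ hSigma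
end

section
/- Let d ≥ 1 and let g : [0,1]^d → [0,∞) be measurable. Then for every measurable s : [0,1]^d → (0,∞) with ∫_{[0,1]^d} s(x) dx = 1, one has ∫_{[0,1]^d} g(x) · s(x)^{−(1+2/d)} dx ≥ (∫_{[0,1]^d} g(x)^{d/(2(d+1))} dx)^{2(d+1)/d}. -/
open MeasureTheory Filter Set
open scoped ENNReal RealInnerProductSpace

/-!
With `p = 2(d+1)/d` and `q` its Hölder conjugate, `g^{1/p} = (g s^{-(1+2/d)})^{1/p} s^{1/q}`
because `1 + 2/d = p - 1 = p/q`. Hölder's inequality with exponents `p, q`, together with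
`∫ s = 1`, then bounds `∫ g^{1/p}` by `(∫ g s^{-(1+2/d)})^{1/p}`.
-/

namespace Real.HolderConjugate

variable {p q : ℝ}

theorem mul_rpow_neg_sub_one_rpow_inv_mul_rpow_inv (hpq : p.HolderConjugate q) {g s : ℝ}
    (hg : 0 ≤ g) (hs : 0 < s) :
    (g * s ^ (-(p - 1))) ^ p⁻¹ * s ^ q⁻¹ = g ^ p⁻¹ := by
  have hexp : -(p - 1) * p⁻¹ + q⁻¹ = 0 := by
    rw [← hpq.one_sub_inv]; field_simp [hpq.ne_zero]; ring
  rw [Real.mul_rpow hg (by positivity), ← Real.rpow_mul hs.le, mul_assoc, ← Real.rpow_add hs,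
    hexp, Real.rpow_zero, mul_one]

end Real.HolderConjugate

namespace ENNReal

variable {α : Type*} [MeasurableSpace α] {μ : Measure α} {p q : ℝ}

theorem lintegral_rpow_inv_mul_rpow_inv_pow_le (hpq : p.HolderConjugate q) {F S : α → ℝ≥0∞}
    (hF : AEMeasurable F μ) (hS : AEMeasurable S μ) (hS1 : ∫⁻ x, S x ∂μ = 1) :
    (∫⁻ x, F x ^ p⁻¹ * S x ^ q⁻¹ ∂μ) ^ p ≤ ∫⁻ x, F x ∂μ := by
  have rpow_inv_rpow {r : ℝ} (hr : r ≠ 0) (a : ℝ≥0∞) : (a ^ r⁻¹) ^ r = a := by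
    rw [← ENNReal.rpow_mul, inv_mul_cancel₀ hr, ENNReal.rpow_one]
  have holder := ENNReal.lintegral_mul_le_Lp_mul_Lq μ hpq (hF.pow_const p⁻¹) (hS.pow_const q⁻¹)
  simp only [Pi.mul_apply, one_div, rpow_inv_rpow hpq.ne_zero, rpow_inv_rpow hpq.symm.ne_zero,
    hS1, ENNReal.one_rpow, mul_one] at holder
  calc (∫⁻ x, F x ^ p⁻¹ * S x ^ q⁻¹ ∂μ) ^ p ≤ ((∫⁻ x, F x ∂μ) ^ p⁻¹) ^ p :=
        ENNReal.rpow_le_rpow holder hpq.nonneg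
    _ = ∫⁻ x, F x ∂μ := rpow_inv_rpow hpq.ne_zero _

theorem lintegral_ofReal_rpow_inv_pow_le_of_lintegral_eq_one (hp : 1 < p) {g s : α → ℝ}
    (hg : AEMeasurable g μ) (hg0 : ∀ x, 0 ≤ g x) (hs : AEMeasurable s μ) (hs0 : ∀ x, 0 < s x)
    (hs1 : ∫⁻ x, ENNReal.ofReal (s x) ∂μ = 1) :
    (∫⁻ x, ENNReal.ofReal (g x ^ p⁻¹) ∂μ) ^ p
      ≤ ∫⁻ x, ENNReal.ofReal (g x * s x ^ (-(p - 1))) ∂μ := by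
  have hpq := Real.HolderConjugate.conjExponent hp
  have factor (x : α) : ENNReal.ofReal (g x ^ p⁻¹) =
      ENNReal.ofReal (g x * s x ^ (-(p - 1))) ^ p⁻¹ * ENNReal.ofReal (s x) ^ p.conjExponent⁻¹ := by
    have hsx := hs0 x
    have hgx := hg0 x
    rw [ENNReal.ofReal_rpow_of_nonneg (by positivity) (inv_nonneg.2 hpq.nonneg),
      ENNReal.ofReal_rpow_of_nonneg hsx.le (inv_nonneg.2 hpq.symm.nonneg),
      ← ENNReal.ofReal_mul (by positivity),
      hpq.mul_rpow_neg_sub_one_rpow_inv_mul_rpow_inv hgx hsx]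
  simp only [factor]
  exact lintegral_rpow_inv_mul_rpow_inv_pow_le hpq
    (hg.mul (hs.pow_const _)).ennreal_ofReal hs.ennreal_ofReal hs1

end ENNReal

/-- The continuous optimal-allocation inequality: for any probability density `s` on the
unit cube, `∫ g / s^{1+2/d} ≥ (∫ g^{d/(2(d+1))})^{2(d+1)/d}`. -/
theorem stmt6 (d : ℕ) (hd : 1 ≤ d)
    (g s : EuclideanSpace ℝ (Fin d) → ℝ)
    (hg : Measurable g) (hg0 : ∀ x, 0 ≤ g x)
    (hs : Measurable s) (hs0 : ∀ x, 0 < s x)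
    (hs1 : ∫⁻ x in unitCube d, ENNReal.ofReal (s x) = 1) :
    (∫⁻ x in unitCube d, ENNReal.ofReal (g x ^ ((d:ℝ)/(2*((d:ℝ)+1))))) ^ (2*((d:ℝ)+1)/(d:ℝ))
      ≤ ∫⁻ x in unitCube d, ENNReal.ofReal (g x * (s x) ^ (-(1+2/(d:ℝ)))) := by
  have hd0 : (0:ℝ) < d := by exact_mod_cast hd
  have hp : 1 < 2 * ((d:ℝ) + 1) / d := by rw [one_lt_div hd0]; linarith
  have hp_inv : (2 * ((d:ℝ) + 1) / d)⁻¹ = d / (2 * (d + 1)) := inv_div _ _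
  have hp_sub_one : 2 * ((d:ℝ) + 1) / d - 1 = 1 + 2 / d := by field_simp; ring
  simpa only [hp_inv, hp_sub_one] using
    ENNReal.lintegral_ofReal_rpow_inv_pow_le_of_lintegral_eq_one hp hg.aemeasurable hg0
      hs.aemeasurable hs0 hs1
end

section
/- Let d ≥ 1 and let f : [0,1]^d → ℝ be differentiable with |f(x) − f(a) − ⟨∇f(a), x − a⟩| ≤ M‖x − a‖₂² for all x, a ∈ [0,1]^d. Let Ω_w ⊆ [0,1]^d be an axis-aligned hypercube of Lebesgue measure w > 0 centered at a, and let σ² be the variance of f on Ω_w. Then w² σ² ≤ w^{2+2/d} ( ‖∇f(a)‖₂/(2√3) + 2Md · w^{1/d} )². -/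
/-!
Replacing the mean by `f a` can only increase the mean square deviation, and on the cube of
side `s` we have `f x - f a = L x + ρ x` with `L x = ⟪∇f(a), x - a⟫` and
`|ρ x| ≤ M ‖x - a‖² ≤ M d s² / 4`. By Minkowski's inequality in `L²`, the root mean square of
`f - f a` is at most that of `L` plus `M d s² / 4`. The coordinates of a uniform point of the
cube are independent and centred at `a` with variance `s² / 12`, so `L` has root mean square
`s ‖∇f(a)‖ / (2 √3)`.
-/

open MeasureTheory Filter Set
open scoped ENNReal RealInnerProductSpace

open Metric WithLp ProbabilityTheory

theorem integral_sq_eq_norm_toLp_sq {α : Type*} [MeasurableSpace α] {μ : Measure α} {u : α → ℝ}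
    (hu : MemLp u 2 μ) : ∫ x, u x ^ 2 ∂μ = ‖hu.toLp u‖ ^ 2 := by
  rw [← real_inner_self_eq_norm_sq, L2.inner_def]
  refine integral_congr_ae ?_
  filter_upwards [hu.coeFn_toLp] with x hx
  simp [hx, sq]

theorem integral_add_sq_le {α : Type*} [MeasurableSpace α] {μ : Measure α} {u v : α → ℝ}
    (hu : MemLp u 2 μ) (hv : MemLp v 2 μ) :
    ∫ x, (u x + v x) ^ 2 ∂μ ≤ (√(∫ x, u x ^ 2 ∂μ) + √(∫ x, v x ^ 2 ∂μ)) ^ 2 := by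
  have huv := integral_sq_eq_norm_toLp_sq (hu.add hv)
  simp only [Pi.add_apply] at huv
  rw [huv, integral_sq_eq_norm_toLp_sq hu, integral_sq_eq_norm_toLp_sq hv,
    Real.sqrt_sq (norm_nonneg _), Real.sqrt_sq (norm_nonneg _), MemLp.toLp_add hu hv]
  gcongr
  exact norm_add_le _ _

theorem setIntegral_univ_pi_prod {ι 𝕜 : Type*} [Fintype ι] [RCLike 𝕜] {α : ι → Type*}
    [∀ i, MeasurableSpace (α i)] (μ : ∀ i, Measure (α i)) [∀ i, SigmaFinite (μ i)]
    (S : ∀ i, Set (α i)) (h : ∀ i, α i → 𝕜) :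
    ∫ y in univ.pi S, ∏ i, h i (y i) ∂Measure.pi μ = ∏ i, ∫ t in S i, h i t ∂μ i := by
  rw [Measure.restrict_pi_pi, integral_fintype_prod_eq_prod]

theorem setIntegral_closedBall_sub_pow (c r : ℝ) (hr : 0 ≤ r) (n : ℕ) :
    ∫ t in closedBall c r, (t - c) ^ n = (r ^ (n + 1) - (-r) ^ (n + 1)) / (n + 1) := by
  rw [Real.closedBall_eq_Icc, integral_Icc_eq_integral_Ioc,
    ← intervalIntegral.integral_of_le (by linarith),
    intervalIntegral.integral_comp_sub_right (fun t => t ^ n) c, integral_pow]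
  ring_nf

section Cube

-- Cubes are sup-norm closed balls of `ι → ℝ`, pulled back to `EuclideanSpace ℝ ι` by `ofLp`.

variable {ι : Type*} [Fintype ι]

theorem setIntegral_closedBall_sub_mul_sub [DecidableEq ι] (c : ι → ℝ) {r : ℝ} (hr : 0 ≤ r)
    (i j : ι) :
    ∫ y in closedBall c r, (y i - c i) * (y j - c j) =
      if i = j then (2 * r) ^ Fintype.card ι * (r ^ 2 / 3) else 0 := by
  set e : ι → ℕ := Pi.single i 1 + Pi.single j 1 with he
  have hmonomial : ∀ y : ι → ℝ, (y i - c i) * (y j - c j) = ∏ k, (y k - c k) ^ e k := by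
    intro y
    simp only [he, Pi.add_apply, pow_add, Finset.prod_mul_distrib, Pi.single_apply, pow_ite,
      pow_one, pow_zero, Finset.prod_ite_eq', Finset.mem_univ, if_true]
  simp_rw [hmonomial]
  rw [closedBall_pi c hr, volume_pi, setIntegral_univ_pi_prod _ _ fun k t => (t - c k) ^ e k]
  simp_rw [setIntegral_closedBall_sub_pow _ _ hr]
  split_ifs with hij
  · subst hij
    have hfactor : ∀ k, (r ^ (e k + 1) - (-r) ^ (e k + 1)) / ((e k : ℕ) + 1 : ℝ) =
        2 * r * (if k = i then r ^ 2 / 3 else 1) := by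
      intro k
      by_cases hk : k = i
      · simp [he, hk]; ring
      · simp [he, hk]; ring
    rw [Finset.prod_congr rfl fun k _ => hfactor k, Finset.prod_mul_distrib, Finset.prod_const,
      Finset.prod_ite_eq', if_pos (Finset.mem_univ i), Finset.card_univ]
  · exact Finset.prod_eq_zero (Finset.mem_univ i) (by simp [he, Ne.symm hij])

theorem setIntegral_closedBall_sum_mul_sub_sq (c g : ι → ℝ) {r : ℝ} (hr : 0 ≤ r) :
    ∫ y in closedBall c r, (∑ i, g i * (y i - c i)) ^ 2 =
      (2 * r) ^ Fintype.card ι * (r ^ 2 / 3) * ∑ i, g i ^ 2 := by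
  classical
  have hint : ∀ i j, IntegrableOn (fun y : ι → ℝ => g i * g j * ((y i - c i) * (y j - c j)))
      (closedBall c r) :=
    fun i j => (Continuous.continuousOn (by fun_prop)).integrableOn_compact
      (isCompact_closedBall c r)
  simp_rw [sq, Finset.sum_mul_sum, mul_mul_mul_comm]
  rw [integral_finsetSum _ fun i _ => integrable_finsetSum _ fun j _ => hint i j]
  simp_rw [integral_finsetSum _ fun j _ => hint _ j, integral_const_mul,
    setIntegral_closedBall_sub_mul_sub c hr, mul_ite, mul_zero, Finset.sum_ite_eq,
    Finset.mem_univ, if_true, Finset.mul_sum]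
  exact Finset.sum_congr rfl fun i _ => by ring

theorem isCompact_preimage_ofLp_closedBall (a : EuclideanSpace ℝ ι) (r : ℝ) :
    IsCompact (ofLp ⁻¹' closedBall (ofLp a) r : Set (EuclideanSpace ℝ ι)) :=
  (PiLp.homeomorph 2 fun _ : ι => ℝ).isCompact_preimage.2 (isCompact_closedBall _ _)

theorem volume_preimage_ofLp_closedBall (a : EuclideanSpace ℝ ι) {r : ℝ} (hr : 0 ≤ r) :
    volume (ofLp ⁻¹' closedBall (ofLp a) r : Set (EuclideanSpace ℝ ι)) =
      ENNReal.ofReal ((2 * r) ^ Fintype.card ι) := by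
  rw [(PiLp.volume_preserving_ofLp ι).measure_preimage measurableSet_closedBall.nullMeasurableSet,
    Real.volume_pi_closedBall _ hr]

theorem norm_sub_sq_le_of_mem_preimage_ofLp_closedBall {a x : EuclideanSpace ℝ ι} {r : ℝ}
    (hx : x ∈ ofLp ⁻¹' closedBall (ofLp a) r) : ‖x - a‖ ^ 2 ≤ Fintype.card ι * r ^ 2 := by
  rw [EuclideanSpace.real_norm_sq_eq, ← nsmul_eq_mul, ← Finset.card_univ, ← Finset.sum_const]
  refine Finset.sum_le_sum fun i _ => ?_
  have hi : |x i - a i| ≤ r := (dist_le_pi_dist (ofLp x) (ofLp a) i).trans hx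
  simpa using sq_le_sq' (abs_le.1 hi).1 (abs_le.1 hi).2

theorem setIntegral_preimage_ofLp_closedBall_inner_sq (a g : EuclideanSpace ℝ ι) {r : ℝ}
    (hr : 0 ≤ r) :
    ∫ x in (ofLp ⁻¹' closedBall (ofLp a) r : Set (EuclideanSpace ℝ ι)), ⟪g, x - a⟫ ^ 2 =
      (2 * r) ^ Fintype.card ι * (r ^ 2 / 3) * ‖g‖ ^ 2 := by
  have hinner : ∀ x : EuclideanSpace ℝ ι, ⟪g, x - a⟫ = ∑ i, g i * (ofLp x i - ofLp a i) := by
    intro x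
    simp [PiLp.inner_apply, mul_comm]
  simp_rw [hinner]
  rw [(PiLp.volume_preserving_ofLp ι).setIntegral_preimage_emb
      (MeasurableEquiv.toLp 2 (ι → ℝ)).symm.measurableEmbedding
      (fun y => (∑ i, g i * (y i - ofLp a i)) ^ 2),
    setIntegral_closedBall_sum_mul_sub_sq _ _ hr, EuclideanSpace.real_norm_sq_eq]

end Cube

theorem centeredCube_eq_preimage_ofLp_closedBall (d : ℕ) (a : EuclideanSpace ℝ (Fin d)) {w : ℝ}
    (hw : 0 ≤ w) :
    centeredCube d a w = ofLp ⁻¹' closedBall (ofLp a) (w ^ (1 / (d : ℝ)) / 2) := by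
  rw [closedBall_pi _ (by positivity)]
  ext x
  simp only [mem_preimage, Set.mem_pi, mem_univ, true_implies, Real.closedBall_eq_Icc]
  rfl

theorem volume_centeredCube {d : ℕ} (hd : d ≠ 0) (a : EuclideanSpace ℝ (Fin d)) {w : ℝ}
    (hw : 0 ≤ w) : volume (centeredCube d a w) = ENNReal.ofReal w := by
  rw [centeredCube_eq_preimage_ofLp_closedBall d a hw,
    volume_preimage_ofLp_closedBall a (by positivity), Fintype.card_fin,
    mul_div_cancel₀ _ two_ne_zero, one_div, Real.rpow_inv_natCast_pow hw hd]

theorem rpow_two_add_two_div_natCast {w : ℝ} (hw : 0 < w) (d : ℕ) :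
    w ^ (2 + 2 / (d : ℝ)) = w ^ 2 * (w ^ (1 / (d : ℝ))) ^ 2 := by
  rw [Real.rpow_add hw, Real.rpow_two, ← Real.rpow_mul_natCast hw.le]
  norm_num [div_eq_mul_one_div 2 (d : ℝ), mul_comm]

section Variance

variable {d : ℕ} {f : EuclideanSpace ℝ (Fin d) → ℝ} {Ω : Set (EuclideanSpace ℝ (Fin d))}

theorem integral_cond_volume (g : EuclideanSpace ℝ (Fin d) → ℝ) :
    ∫ x, g x ∂volume[|Ω] = (volume Ω).toReal⁻¹ * ∫ x in Ω, g x := by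
  rw [ProbabilityTheory.cond, integral_smul_measure, ENNReal.toReal_inv, smul_eq_mul]

theorem varOn_eq_variance (hf : AEMeasurable f (volume.restrict Ω)) :
    varOn f Ω = Var[f; volume[|Ω]] := by
  have hf' : AEMeasurable f volume[|Ω] := hf.smul_measure _
  rw [variance_eq_integral hf', integral_cond_volume, varOn, meanOn, integral_cond_volume]

theorem varOn_le_setIntegral_sub_sq (hΩ : volume Ω ≠ ∞)
    (hf : AEStronglyMeasurable f (volume.restrict Ω)) (c : ℝ) :
    varOn f Ω ≤ (volume Ω).toReal⁻¹ * ∫ x in Ω, (f x - c) ^ 2 := by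
  rcases eq_or_ne (volume Ω) 0 with hΩ0 | hΩ0
  · simp [varOn, hΩ0]
  have := cond_isProbabilityMeasure_of_finite hΩ0 hΩ
  have hf' : AEStronglyMeasurable f volume[|Ω] := hf.smul_measure _
  rw [varOn_eq_variance hf.aemeasurable, ← variance_sub_const hf' c, ← integral_cond_volume]
  exact variance_le_expectation_sq (hf'.sub aestronglyMeasurable_const)

theorem varOn_le_sq_add_of_abs_sub_le {L : EuclideanSpace ℝ (Fin d) → ℝ} {c X R : ℝ}
    (hΩ : MeasurableSet Ω) (hΩfin : volume Ω ≠ ∞)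
    (hf : AEStronglyMeasurable f (volume.restrict Ω)) (hL : MemLp L 2 (volume.restrict Ω))
    (hX : 0 ≤ X) (hLX : ∫ x in Ω, L x ^ 2 ≤ (volume Ω).toReal * X ^ 2)
    (hR : 0 ≤ R) (hfL : ∀ x ∈ Ω, |f x - c - L x| ≤ R) :
    varOn f Ω ≤ (X + R) ^ 2 := by
  have : IsFiniteMeasure (volume.restrict Ω) := isFiniteMeasure_restrict.2 hΩfin
  set V := (volume Ω).toReal
  have hr : MemLp (fun x => f x - c - L x) 2 (volume.restrict Ω) :=
    .of_bound ((hf.sub aestronglyMeasurable_const).sub hL.1) R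
      (ae_restrict_of_forall_mem hΩ hfL)
  have hrR : ∫ x in Ω, (f x - c - L x) ^ 2 ≤ V * R ^ 2 := by
    calc ∫ x in Ω, (f x - c - L x) ^ 2 ≤ ∫ _ in Ω, R ^ 2 :=
          setIntegral_mono_on hr.integrable_sq (integrableOn_const hΩfin) hΩ fun x hx =>
            sq_le_sq' (abs_le.1 (hfL x hx)).1 (abs_le.1 (hfL x hx)).2
      _ = V * R ^ 2 := by rw [setIntegral_const, smul_eq_mul, measureReal_def]
  calc varOn f Ω ≤ V⁻¹ * ∫ x in Ω, (f x - c) ^ 2 := varOn_le_setIntegral_sub_sq hΩfin hf c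
    _ = V⁻¹ * ∫ x in Ω, (L x + (f x - c - L x)) ^ 2 := by simp only [add_sub_cancel]
    _ ≤ V⁻¹ * (√(∫ x in Ω, L x ^ 2) + √(∫ x in Ω, (f x - c - L x) ^ 2)) ^ 2 := by
        gcongr; exact integral_add_sq_le hL hr
    _ ≤ V⁻¹ * (√(V * X ^ 2) + √(V * R ^ 2)) ^ 2 := by gcongr
    _ = V⁻¹ * V * (X + R) ^ 2 := by
        rw [Real.sqrt_mul ENNReal.toReal_nonneg, Real.sqrt_mul ENNReal.toReal_nonneg,
          Real.sqrt_sq hX, Real.sqrt_sq hR, ← mul_add, mul_pow, Real.sq_sqrt ENNReal.toReal_nonneg]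
        ring
    _ ≤ (X + R) ^ 2 := by
        rcases eq_or_ne V 0 with hV | hV
        · simp only [hV, inv_zero, mul_zero, zero_mul]; positivity
        · rw [inv_mul_cancel₀ hV, one_mul]

end Variance

theorem varOn_preimage_ofLp_closedBall_le {d : ℕ} {f : EuclideanSpace ℝ (Fin d) → ℝ}
    {a g : EuclideanSpace ℝ (Fin d)} {r M : ℝ} (hr : 0 ≤ r) (hM : 0 ≤ M)
    (hf : ContinuousOn f (ofLp ⁻¹' closedBall (ofLp a) r))
    (hfg : ∀ x ∈ (ofLp ⁻¹' closedBall (ofLp a) r : Set (EuclideanSpace ℝ (Fin d))),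
      |f x - f a - ⟪g, x - a⟫| ≤ M * ‖x - a‖ ^ 2) :
    varOn f (ofLp ⁻¹' closedBall (ofLp a) r) ≤ (r * ‖g‖ / √3 + M * (d * r ^ 2)) ^ 2 := by
  have hΩ : MeasurableSet (ofLp ⁻¹' closedBall (ofLp a) r : Set (EuclideanSpace ℝ (Fin d))) :=
    measurableSet_closedBall.preimage (measurable_ofLp ..)
  have hL : Continuous fun x : EuclideanSpace ℝ (Fin d) => ⟪g, x - a⟫ := by fun_prop
  refine varOn_le_sq_add_of_abs_sub_le hΩ ?_ (hf.aestronglyMeasurable hΩ) ?_ (by positivity) ?_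
    (by positivity) fun x hx => (hfg x hx).trans ?_
  · rw [volume_preimage_ofLp_closedBall a hr]
    exact ENNReal.ofReal_ne_top
  · exact (memLp_two_iff_integrable_sq hL.aestronglyMeasurable).2
      ((hL.pow 2).continuousOn.integrableOn_compact (isCompact_preimage_ofLp_closedBall a r))
  · rw [setIntegral_preimage_ofLp_closedBall_inner_sq a g hr, volume_preimage_ofLp_closedBall a hr,
      ENNReal.toReal_ofReal (by positivity), Fintype.card_fin, div_pow, Real.sq_sqrt (by norm_num)]
    exact le_of_eq (by ring)
  · simpa using mul_le_mul_of_nonneg_left (norm_sub_sq_le_of_mem_preimage_ofLp_closedBall hx) hM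

/-- Upper bound on the variance of `f` on a small hypercube, under a second-order
Taylor condition (Equation (12) of the paper). -/
theorem stmt13 (d : ℕ) (hd : 1 ≤ d) (f : EuclideanSpace ℝ (Fin d) → ℝ) (M : ℝ)
    (hdiff : ∀ x ∈ unitCube d, DifferentiableAt ℝ f x)
    (htaylor : ∀ x ∈ unitCube d, ∀ a ∈ unitCube d,
        |f x - f a - ⟪gradient f a, x - a⟫| ≤ M * ‖x - a‖^2)
    (a : EuclideanSpace ℝ (Fin d)) (w : ℝ) (hw : 0 < w)
    (hsub : centeredCube d a w ⊆ unitCube d) :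
    w^2 * varOn f (centeredCube d a w)
      ≤ w ^ (2+2/(d:ℝ)) *
          (‖gradient f a‖/(2*Real.sqrt 3) + 2*M*(d:ℝ) * w ^ (1/(d:ℝ)))^2 := by
  set s := w ^ (1 / (d : ℝ))
  have hcube := centeredCube_eq_preimage_ofLp_closedBall d a hw.le
  have ha : a ∈ unitCube d := hsub (by rw [hcube]; exact mem_closedBall_self (by positivity))
  have : Nonempty (Fin d) := ⟨⟨0, hd⟩⟩
  obtain ⟨x, hx, hxa⟩ : (centeredCube d a w \ {a}).Nonempty := nonempty_of_measure_ne_zero <| by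
    rw [measure_sdiff_null (measure_singleton (μ := volume) a),
      volume_centeredCube (by omega) a hw.le]
    exact ENNReal.ofReal_pos.2 hw |>.ne'
  have hM : 0 ≤ M :=
    nonneg_of_mul_nonneg_left ((abs_nonneg _).trans (htaylor x (hsub hx) a ha))
      (pow_pos (norm_pos_iff.2 (sub_ne_zero.2 hxa)) 2)
  have hvar : varOn f (centeredCube d a w) ≤
      (s / 2 * ‖gradient f a‖ / √3 + M * (d * (s / 2) ^ 2)) ^ 2 := by
    rw [hcube] at hsub ⊢
    exact varOn_preimage_ofLp_closedBall_le (by positivity) hM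
      (fun x hx => (hdiff x (hsub hx)).continuousAt.continuousWithinAt)
      (fun x hx => htaylor x (hsub hx) a ha)
  calc w ^ 2 * varOn f (centeredCube d a w)
      ≤ w ^ 2 * (s / 2 * ‖gradient f a‖ / √3 + M * (d * (s / 2) ^ 2)) ^ 2 := by gcongr
    _ ≤ w ^ 2 * (s * (‖gradient f a‖ / (2 * √3) + 2 * M * d * s)) ^ 2 := by
        gcongr w ^ 2 * ?_ ^ 2
        have hMd : 0 ≤ M * d * s ^ 2 := by positivity
        linear_combination (7 / 4) * hMd
    _ = _ := by rw [rpow_two_add_two_div_natCast hw]; ring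
end

section
/- Let d ≥ 1 and let f : [0,1]^d → ℝ be differentiable with |f(x) − f(a) − ⟨∇f(a), x − a⟩| ≤ M‖x − a‖₂² for all x, a ∈ [0,1]^d. Let Ω_w ⊆ [0,1]^d be an axis-aligned hypercube of Lebesgue measure w > 0 centered at a, and let σ² be the variance of f on Ω_w. Then w² σ² ≥ w^{2+2/d} · max( ‖∇f(a)‖₂/(2√3) − 2Md · w^{1/d}, 0 )². -/
open MeasureTheory Filter Set
open scoped ENNReal RealInnerProductSpace

/-!
View the cube `Ω` of side `s = w^{1/d}` as a probability space under normalised Lebesgue measure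
and split `f = ⟪∇f(a), ·⟫ + r`. The standard deviation is the `L²` norm of the centred function,
so `σ(f) ≥ σ(⟪∇f(a), ·⟫) - σ(r)`. The coordinates are independent and uniform on intervals of
length `s`, so the linear part has variance `‖∇f(a)‖² s² / 12`, while the Taylor bound keeps `r`
within `M d s² / 4` of the constant `f(a) - ⟪∇f(a), a⟫`, so `σ(r) ≤ M d s² / 4`. Hence
`σ(f) ≥ s (‖∇f(a)‖ / (2√3) - M d s / 4)`, and `w^{2+2/d} = w² s²`.
-/

open ProbabilityTheory

namespace ProbabilityTheory

section Variance

variable {Ω : Type*} [MeasurableSpace Ω] {μ : Measure Ω} [IsFiniteMeasure μ] {X Y : Ω → ℝ}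

lemma sq_covariance_le_variance_mul_variance (hX : MemLp X 2 μ) (hY : MemLp Y 2 μ) :
    cov[X, Y; μ] ^ 2 ≤ Var[X; μ] * Var[Y; μ] := by
  have hquad : ∀ t : ℝ, 0 ≤ Var[Y; μ] * (t * t) + 2 * cov[X, Y; μ] * t + Var[X; μ] := by
    intro t
    have := variance_nonneg (X + t • Y) μ
    rw [variance_add hX (hY.const_smul t), covariance_smul_right, variance_smul] at this
    linarith
  have := discrim_le_zero hquad
  rw [discrim] at this
  linarith

lemma sqrt_variance_sub_sqrt_variance_le (hX : MemLp X 2 μ) (hY : MemLp Y 2 μ) :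
    √Var[X; μ] - √Var[Y; μ] ≤ √Var[X + Y; μ] := by
  have hcov : -(√Var[X; μ] * √Var[Y; μ]) ≤ cov[X, Y; μ] := by
    rw [← Real.sqrt_mul (variance_nonneg X μ)]
    exact neg_le_of_abs_le (Real.abs_le_sqrt (sq_covariance_le_variance_mul_variance hX hY))
  refine Real.le_sqrt_of_sq_le ?_
  rw [variance_add hX hY]
  nlinarith [Real.sq_sqrt (variance_nonneg X μ), Real.sq_sqrt (variance_nonneg Y μ)]

end Variance

lemma integral_cond {Ω : Type*} [MeasurableSpace Ω] (μ : Measure Ω) (s : Set Ω) (f : Ω → ℝ) :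
    ∫ x, f x ∂μ[|s] = (μ s).toReal⁻¹ * ∫ x in s, f x ∂μ := by
  rw [cond, integral_smul_measure, ENNReal.toReal_inv, smul_eq_mul]

lemma variance_id_cond_Icc {l u : ℝ} (hlu : l < u) :
    Var[id; volume[|Icc l u]] = (u - l) ^ 2 / 12 := by
  have hvol : (volume (Icc l u)).toReal = u - l := by
    rw [Real.volume_Icc, ENNReal.toReal_ofReal (by linarith)]
  have hlen : u - l ≠ 0 := by linarith
  have hint : ∀ c : ℝ, ∀ n : ℕ, ∫ t in Icc l u, (t - c) ^ n
      = ((u - c) ^ (n + 1) - (l - c) ^ (n + 1)) / (n + 1) := by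
    intro c n
    rw [integral_Icc_eq_integral_Ioc, ← intervalIntegral.integral_of_le hlu.le,
      intervalIntegral.integral_comp_sub_right (fun t => t ^ n), integral_pow]
  have hmean : ∫ t, id t ∂volume[|Icc l u] = (l + u) / 2 := by
    have := hint 0 1
    simp only [sub_zero, pow_one] at this
    rw [integral_cond, hvol]
    simp only [id, this]
    field_simp
    ring
  rw [variance_eq_integral measurable_id.aemeasurable, hmean, integral_cond, hvol]
  simp only [id, hint]
  field_simp
  ring

lemma variance_cond_le_sq_of_abs_sub_le {Ω : Type*} [MeasurableSpace Ω] {μ : Measure Ω}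
    {s : Set Ω} (hs : MeasurableSet s) [IsProbabilityMeasure μ[|s]] {X : Ω → ℝ}
    (hX : AEMeasurable X μ[|s]) {c ε : ℝ} (h : ∀ x ∈ s, |X x - c| ≤ ε) :
    Var[X; μ[|s]] ≤ ε ^ 2 := by
  have hbound : ∀ᵐ x ∂μ[|s], X x ∈ Icc (c - ε) (c + ε) :=
    ae_cond_of_forall_mem hs fun x hx => by
      constructor <;> linarith [(abs_le.mp (h x hx)).1, (abs_le.mp (h x hx)).2]
  convert variance_le_sq_of_bounded hbound hX using 1
  ring

lemma cond_pi_univ_pi {ι : Type*} [Fintype ι] {α : ι → Type*}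
    [∀ i, MeasurableSpace (α i)] (μ : ∀ i, Measure (α i)) [∀ i, SigmaFinite (μ i)]
    {s : ∀ i, Set (α i)} (hs : ∀ i, MeasurableSet (s i)) (hs₀ : ∀ i, μ i (s i) ≠ 0) :
    (Measure.pi μ)[|univ.pi s] = Measure.pi fun i => (μ i)[|s i] := by
  refine (Measure.pi_eq fun t _ => ?_).symm
  rw [cond_apply (MeasurableSet.univ_pi hs), Measure.pi_pi, ← pi_inter_distrib, Measure.pi_pi,
    ENNReal.prod_inv_distrib (fun i _ j _ _ => Or.inl (hs₀ i)), ← Finset.prod_mul_distrib]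
  exact Finset.prod_congr rfl fun i _ => (cond_apply (hs i) _ _).symm

end ProbabilityTheory

lemma MeasureTheory.MeasurePreserving.cond {α β : Type*} [MeasurableSpace α] [MeasurableSpace β]
    {μ : Measure α} {ν : Measure β} {f : α → β} (hf : MeasurePreserving f μ ν) {s : Set β}
    (hs : MeasurableSet s) : MeasurePreserving f μ[|f ⁻¹' s] ν[|s] := by
  rw [ProbabilityTheory.cond, ProbabilityTheory.cond, hf.measure_preimage hs.nullMeasurableSet]
  exact (hf.restrict_preimage hs).smul_measure _

namespace EuclideanSpace

variable {ι : Type*}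

def box (I : ι → Set ℝ) : Set (EuclideanSpace ℝ ι) := {x | ∀ i, x i ∈ I i}

lemma box_eq_preimage_pi (I : ι → Set ℝ) : box I = WithLp.ofLp ⁻¹' univ.pi I := by
  ext x
  simp [box]

lemma isCompact_box {I : ι → Set ℝ} (hI : ∀ i, IsCompact (I i)) : IsCompact (box I) := by
  rw [box_eq_preimage_pi]
  exact (PiLp.continuousLinearEquiv 2 ℝ fun _ : ι => ℝ).toHomeomorph.isCompact_preimage.mpr
    (isCompact_univ_pi hI)

variable [Fintype ι]

lemma measurableSet_box {I : ι → Set ℝ} (hI : ∀ i, MeasurableSet (I i)) :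
    MeasurableSet (box I) := by
  rw [box_eq_preimage_pi]
  exact (MeasurableSet.univ_pi hI).preimage (PiLp.volume_preserving_ofLp ι).measurable

lemma volume_box {I : ι → Set ℝ} (hI : ∀ i, MeasurableSet (I i)) :
    volume (box I) = ∏ i, volume (I i) := by
  rw [box_eq_preimage_pi, (PiLp.volume_preserving_ofLp ι).measure_preimage
    (MeasurableSet.univ_pi hI).nullMeasurableSet, volume_pi_pi]

lemma variance_inner_cond_box (g : EuclideanSpace ℝ ι) {l u : ι → ℝ} (hlu : ∀ i, l i < u i) :
    Var[fun x => ⟪g, x⟫; volume[|box fun i => Icc (l i) (u i)]]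
      = ∑ i, g i ^ 2 * (u i - l i) ^ 2 / 12 := by
  have hI : ∀ i, MeasurableSet (Icc (l i) (u i)) := fun _ => measurableSet_Icc
  have hI₀ : ∀ i, volume (Icc (l i) (u i)) ≠ 0 := fun i => by simp [hlu i]
  have : ∀ i, IsProbabilityMeasure volume[|Icc (l i) (u i)] := fun i =>
    cond_isProbabilityMeasure_of_finite (hI₀ i) measure_Icc_lt_top.ne
  have hid : ∀ i, MemLp id 2 volume[|Icc (l i) (u i)] := fun i =>
    memLp_of_bounded (ae_cond_mem (hI i)) aestronglyMeasurable_id 2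
  have hinner : (fun x : EuclideanSpace ℝ ι => ⟪g, x⟫)
      = fun x => (∑ i, fun y : ι → ℝ => g i * y i) (WithLp.ofLp x) := by
    ext x
    simp [PiLp.inner_apply, mul_comm]
  -- Through `ofLp`, the uniform measure on the box is the product of the uniform measures on its
  -- sides, under which the coordinates are independent.
  rw [hinner, box_eq_preimage_pi, ((PiLp.volume_preserving_ofLp ι).cond
    (MeasurableSet.univ_pi hI)).variance_fun_comp (by fun_prop), volume_pi,
    cond_pi_univ_pi _ hI hI₀]
  refine (variance_sum_pi (X := fun i t => g i * id t) fun i => (hid i).const_mul (g i)).trans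
    (Finset.sum_congr rfl fun i _ => ?_)
  rw [variance_const_mul, variance_id_cond_Icc (hlu i)]
  ring

lemma norm_sub_sq_le_of_mem_box {a x : EuclideanSpace ℝ ι} {r : ℝ}
    (hx : x ∈ box fun i => Icc (a i - r) (a i + r)) : ‖x - a‖ ^ 2 ≤ Fintype.card ι * r ^ 2 := by
  rw [EuclideanSpace.norm_sq_eq]
  calc ∑ i, ‖(x - a) i‖ ^ 2 ≤ ∑ _i : ι, r ^ 2 := Finset.sum_le_sum fun i _ => by
        rw [Real.norm_eq_abs, sq_abs, PiLp.sub_apply]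
        exact sq_le_sq' (by linarith [(hx i).1]) (by linarith [(hx i).2])
    _ = Fintype.card ι * r ^ 2 := by simp

end EuclideanSpace

lemma ContinuousOn.memLp_cond {α : Type*} [TopologicalSpace α] [MeasurableSpace α]
    [OpensMeasurableSpace α] {μ : Measure α} {s : Set α} {f : α → ℝ} (hf : ContinuousOn f s)
    (hs : IsCompact s) (hsm : MeasurableSet s) (p : ℝ≥0∞) : MemLp f p μ[|s] := by
  obtain ⟨C, hC⟩ := hs.exists_bound_of_continuousOn hf
  exact MemLp.of_bound ((hf.aestronglyMeasurable hsm).smul_measure _) C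
    (ae_cond_of_forall_mem hsm hC)

section CenteredCube

open EuclideanSpace

variable {d : ℕ}

lemma varOn_eq_variance_cond {f : EuclideanSpace ℝ (Fin d) → ℝ}
    {Ω : Set (EuclideanSpace ℝ (Fin d))} (hf : AEMeasurable f volume[|Ω]) :
    varOn f Ω = Var[f; volume[|Ω]] := by
  rw [variance_eq_integral hf, integral_cond, integral_cond]
  rfl

lemma varOn_nonneg (f : EuclideanSpace ℝ (Fin d) → ℝ) (Ω : Set (EuclideanSpace ℝ (Fin d))) :
    0 ≤ varOn f Ω :=
  mul_nonneg (inv_nonneg.mpr ENNReal.toReal_nonneg) (integral_nonneg fun _ => sq_nonneg _)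

lemma centeredCube_eq_box (a : EuclideanSpace ℝ (Fin d)) (w : ℝ) :
    centeredCube d a w
      = box fun i => Icc (a i - w ^ (1 / (d : ℝ)) / 2) (a i + w ^ (1 / (d : ℝ)) / 2) :=
  rfl

lemma isProbabilityMeasure_cond_centeredCube (hd : d ≠ 0) (a : EuclideanSpace ℝ (Fin d))
    {w : ℝ} (hw : 0 < w) : IsProbabilityMeasure volume[|centeredCube d a w] := by
  have hvol : volume (centeredCube d a w) = ENNReal.ofReal w := by
    rw [centeredCube_eq_box, volume_box fun _ => measurableSet_Icc]
    simp only [Real.volume_Icc, add_sub_sub_cancel, add_halves, Finset.prod_const,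
      Finset.card_univ, Fintype.card_fin]
    rw [← ENNReal.ofReal_pow (by positivity), one_div, Real.rpow_inv_natCast_pow hw.le hd]
  exact cond_isProbabilityMeasure_of_finite (by simp [hvol, hw]) (by simp [hvol])

lemma variance_inner_cond_centeredCube (g a : EuclideanSpace ℝ (Fin d)) {w : ℝ} (hw : 0 < w) :
    Var[fun x => ⟪g, x⟫; volume[|centeredCube d a w]]
      = (w ^ (1 / (d : ℝ)) * (‖g‖ / (2 * √3))) ^ 2 := by
  have hs : 0 < w ^ (1 / (d : ℝ)) := by positivity
  rw [centeredCube_eq_box, variance_inner_cond_box g fun i => by linarith, mul_pow, div_pow,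
    mul_pow, Real.sq_sqrt (by norm_num), EuclideanSpace.norm_sq_eq, Finset.sum_div,
    Finset.mul_sum]
  refine Finset.sum_congr rfl fun i _ => ?_
  rw [Real.norm_eq_abs, sq_abs]
  ring

lemma variance_sub_inner_cond_centeredCube_le (hd : d ≠ 0) {f : EuclideanSpace ℝ (Fin d) → ℝ}
    {g a : EuclideanSpace ℝ (Fin d)} {w M : ℝ} (hw : 0 < w) (hM : 0 ≤ M)
    (hf : AEMeasurable f volume[|centeredCube d a w])
    (htaylor : ∀ x ∈ centeredCube d a w, |f x - f a - ⟪g, x - a⟫| ≤ M * ‖x - a‖ ^ 2) :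
    Var[fun x => f x - ⟪g, x⟫; volume[|centeredCube d a w]]
      ≤ (M * d * (w ^ (1 / (d : ℝ)) / 2) ^ 2) ^ 2 := by
  have := isProbabilityMeasure_cond_centeredCube hd a hw
  refine variance_cond_le_sq_of_abs_sub_le (s := centeredCube d a w)
    (measurableSet_box fun _ => measurableSet_Icc)
    (hf.sub (by fun_prop)) (c := f a - ⟪g, a⟫) fun x hx => ?_
  calc |f x - ⟪g, x⟫ - (f a - ⟪g, a⟫)| = |f x - f a - ⟪g, x - a⟫| := by
        rw [inner_sub_right]; ring_nf
    _ ≤ M * ‖x - a‖ ^ 2 := htaylor x hx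
    _ ≤ M * (d * (w ^ (1 / (d : ℝ)) / 2) ^ 2) := by
        gcongr
        simpa only [Fintype.card_fin] using norm_sub_sq_le_of_mem_box hx
    _ = M * d * (w ^ (1 / (d : ℝ)) / 2) ^ 2 := by ring

lemma self_mem_centeredCube (a : EuclideanSpace ℝ (Fin d)) {w : ℝ} (hw : 0 < w) :
    a ∈ centeredCube d a w := by
  have hs : 0 < w ^ (1 / (d : ℝ)) := by positivity
  exact fun i => ⟨by linarith, by linarith⟩

lemma le_sqrt_varOn_centeredCube (hd : d ≠ 0) {f : EuclideanSpace ℝ (Fin d) → ℝ}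
    {g a : EuclideanSpace ℝ (Fin d)} {w M : ℝ} (hw : 0 < w) (hM : 0 ≤ M)
    (hf : ContinuousOn f (centeredCube d a w))
    (htaylor : ∀ x ∈ centeredCube d a w, |f x - f a - ⟪g, x - a⟫| ≤ M * ‖x - a‖ ^ 2) :
    w ^ (1 / (d : ℝ)) * (‖g‖ / (2 * √3)) - M * d * (w ^ (1 / (d : ℝ)) / 2) ^ 2
      ≤ √(varOn f (centeredCube d a w)) := by
  have := isProbabilityMeasure_cond_centeredCube hd a hw
  have hSm : MeasurableSet (centeredCube d a w) := measurableSet_box fun _ => measurableSet_Icc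
  have hSc : IsCompact (centeredCube d a w) := isCompact_box fun _ => isCompact_Icc
  have hfL : MemLp f 2 volume[|centeredCube d a w] := hf.memLp_cond hSc hSm 2
  have hℓL : MemLp (fun x => ⟪g, x⟫) 2 volume[|centeredCube d a w] :=
    (continuous_const.inner continuous_id).continuousOn.memLp_cond hSc hSm 2
  have hσr : √Var[f - fun x => ⟪g, x⟫; volume[|centeredCube d a w]]
      ≤ M * d * (w ^ (1 / (d : ℝ)) / 2) ^ 2 :=
    (Real.sqrt_le_left (by positivity)).mpr <|
      variance_sub_inner_cond_centeredCube_le hd hw hM hfL.aemeasurable htaylor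
  have hσf := sqrt_variance_sub_sqrt_variance_le hℓL (hfL.sub hℓL)
  rw [variance_inner_cond_centeredCube g a hw, Real.sqrt_sq (by positivity), add_sub_cancel]
    at hσf
  rw [varOn_eq_variance_cond hfL.aemeasurable]
  linarith

lemma nonneg_of_forall_unitCube_abs_le_mul_norm_sub_sq (hd : d ≠ 0)
    {F : EuclideanSpace ℝ (Fin d) → EuclideanSpace ℝ (Fin d) → ℝ} {M : ℝ}
    (h : ∀ x ∈ unitCube d, ∀ y ∈ unitCube d, |F x y| ≤ M * ‖x - y‖ ^ 2) : 0 ≤ M := by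
  have h10 := h (WithLp.toLp 2 fun _ => 1) (fun _ => by simp) 0 (fun _ => by simp)
  have hnorm : ‖(WithLp.toLp 2 fun _ : Fin d => (1 : ℝ)) - 0‖ ^ 2 = d := by
    simp [EuclideanSpace.norm_sq_eq]
  rw [hnorm] at h10
  exact nonneg_of_mul_nonneg_left ((abs_nonneg _).trans h10) (by positivity)

end CenteredCube

/-- Lower bound on the variance of `f` on a small hypercube, under a second-order
Taylor condition (Equation (13) of the paper). -/
theorem stmt14 (d : ℕ) (hd : 1 ≤ d) (f : EuclideanSpace ℝ (Fin d) → ℝ) (M : ℝ)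
    (hdiff : ∀ x ∈ unitCube d, DifferentiableAt ℝ f x)
    (htaylor : ∀ x ∈ unitCube d, ∀ a ∈ unitCube d,
        |f x - f a - ⟪gradient f a, x - a⟫| ≤ M * ‖x - a‖^2)
    (a : EuclideanSpace ℝ (Fin d)) (w : ℝ) (hw : 0 < w)
    (hsub : centeredCube d a w ⊆ unitCube d) :
    w^2 * varOn f (centeredCube d a w)
      ≥ w ^ (2+2/(d:ℝ)) *
          (max (‖gradient f a‖/(2*Real.sqrt 3) - 2*M*(d:ℝ) * w ^ (1/(d:ℝ))) 0)^2 := by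
  set s := w ^ (1 / (d : ℝ)) with hs_def
  have hd₀ : d ≠ 0 := by omega
  have hs : 0 < s := by positivity
  have hM : 0 ≤ M := nonneg_of_forall_unitCube_abs_le_mul_norm_sub_sq hd₀ htaylor
  have hσ := le_sqrt_varOn_centeredCube hd₀ hw hM
    (fun x hx => (hdiff x (hsub hx)).continuousAt.continuousWithinAt)
    fun x hx => htaylor x (hsub hx) a (hsub (self_mem_centeredCube a hw))
  have hpow : w ^ (2 + 2 / (d : ℝ)) = w ^ 2 * s ^ 2 := by
    rw [Real.rpow_add hw, Real.rpow_two, hs_def, ← Real.rpow_mul_natCast hw.le]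
    congr 2
    push_cast
    ring
  rw [hpow, ge_iff_le, mul_assoc]
  gcongr
  rw [← mul_pow, ← Real.le_sqrt (by positivity) (varOn_nonneg ..), mul_max_of_nonneg _ _ hs.le,
    mul_zero]
  refine max_le ?_ (Real.sqrt_nonneg _)
  have : 0 ≤ M * d * s ^ 2 := by positivity
  linarith
end
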